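/- For every n ≥ 3, let I be the connected Grassmann necklace of 2-element subsets of [n] given by I_j = {j, j+1} for 1 ≤ j ≤ n−1 and I_n = {n, 1}. Then the interior size of I is n−3, and the number of maximal weakly separated collections over I (i.e., the number of vertices of the exchange graph G^I) equals the Catalan number C_{n−2}. In particular, for every i ≥ 0 there exists a connected Grassmann necklace with interior size i whose exchange graph has exactly C_{i+1} vertices. -/

import Mathlib

/-! For `2`-subsets of `[n]`, weak separation says that the chords `{a, b}` and `{c, d}` of the
`n`-gon do not cross, and every `2`-subset lies in the positroid of this necklace. So the maximal
weakly separated collections are the triangulations of the `n`-gon, counted together with its `n`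
sides. In a triangulation of the polygon on the vertices `i < ⋯ < j`, the edge `{i, j}` lies in
exactly one triangle `{i, k, j}`, which cuts it into triangulations of the polygons on `i, …, k`
and `k, …, j`. This bijection gives the size `2 (j - i) - 1` of every triangulation and the
Catalan recursion for their number. -/

open SimpleGraph

namespace WS

/-- Integers (elements of the cyclically ordered set `[n]`, identified with `Fin n`)
are *cyclically ordered* if some rotation of the list is strictly increasing. -/
def CyclicallyOrdered {n : ℕ} (l : List (Fin n)) : Prop :=
  ∃ k : ℕ, (l.rotate k).Pairwise (· < ·)

/-- Two subsets of `[n]` are *weakly separated*. -/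
def WeaklySeparated {n : ℕ} (A B : Finset (Fin n)) : Prop :=
  ¬ ∃ a b a' b' : Fin n, CyclicallyOrdered [a, b, a', b'] ∧
      a ∈ A \ B ∧ a' ∈ A \ B ∧ b ∈ B \ A ∧ b' ∈ B \ A

/-- The cyclic successor `i + 1` in `[n]`. -/
def cnext {n : ℕ} (i : Fin n) : Fin n := i + ⟨1 % n, Nat.mod_lt 1 i.pos⟩

/-- A (connected) Grassmann necklace. -/
def IsGrassmannNecklace {n : ℕ} (N : Fin n → Finset (Fin n)) : Prop :=
  (∀ i j : Fin n, (N i).card = (N j).card) ∧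
    (∀ i : Fin n, cnext i ∈ N (cnext i)) ∧ ∀ i : Fin n, N i \ {i} ⊆ N (cnext i)

/-- The linear order `<ᵢ` on `[n]` starting at `i`. -/
def cyclicLT {n : ℕ} (i a b : Fin n) : Prop := (a - i).val < (b - i).val

instance {n : ℕ} (i a b : Fin n) : Decidable (cyclicLT i a b) :=
  inferInstanceAs (Decidable ((a - i).val < (b - i).val))

/-- The Gale order `≤ᵢ` : comparing the sorted lists elementwise w.r.t. `≤ᵢ`. -/
def FinsetLE {n : ℕ} (i : Fin n) (A B : Finset (Fin n)) : Prop :=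
  List.Forall₂ (· ≤ ·) (Finset.sort (A.image fun x => x - i) (· ≤ ·))
    (Finset.sort (B.image fun x => x - i) (· ≤ ·))

/-- The positroid associated to a Grassmann necklace. -/
def positroid {n : ℕ} (N : Fin n → Finset (Fin n)) : Set (Finset (Fin n)) :=
  {J | (∀ i, J.card = (N i).card) ∧ ∀ i, FinsetLE i (N i) J}

/-- A weakly separated collection. -/
def IsWSC {n : ℕ} (W : Finset (Finset (Fin n))) : Prop :=
  ∀ A ∈ W, ∀ B ∈ W, WeaklySeparated A B

/-- A weakly separated collection over a Grassmann necklace. -/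
def IsWSCOver {n : ℕ} (N : Fin n → Finset (Fin n)) (W : Finset (Finset (Fin n))) : Prop :=
  IsWSC W ∧ ∀ A ∈ W, A ∈ positroid N

/-- A maximal weakly separated collection over a Grassmann necklace. -/
def IsMaxWSCOver {n : ℕ} (N : Fin n → Finset (Fin n)) (W : Finset (Finset (Fin n))) : Prop :=
  IsWSCOver N W ∧ ∀ W', IsWSCOver N W' → W ⊆ W' → W' = W

/-- `V ∪ {a, b}`. -/
def pairAdd {n : ℕ} (V : Finset (Fin n)) (a b : Fin n) : Finset (Fin n) :=
  insert a (insert b V)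

/-- `V₂` is obtained from `V₁` by a mutation. -/
def Mutation {n : ℕ} (V1 V2 : Finset (Finset (Fin n))) : Prop :=
  ∃ (V : Finset (Fin n)) (a b c d : Fin n),
    CyclicallyOrdered [a, b, c, d] ∧ a ∉ V ∧ b ∉ V ∧ c ∉ V ∧ d ∉ V ∧
    pairAdd V a b ∈ V1 ∧ pairAdd V b c ∈ V1 ∧ pairAdd V c d ∈ V1 ∧
    pairAdd V d a ∈ V1 ∧ pairAdd V a c ∈ V1 ∧
    V2 = insert (pairAdd V b d) (V1.erase (pairAdd V a c))

/-- The type of maximal weakly separated collections over `N`. -/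
abbrev MWSC {n : ℕ} (N : Fin n → Finset (Fin n)) : Type :=
  {W : Finset (Finset (Fin n)) // IsMaxWSCOver N W}

/-- The exchange graph of a Grassmann necklace. -/
def exchangeGraph {n : ℕ} (N : Fin n → Finset (Fin n)) : SimpleGraph (MWSC N) :=
  SimpleGraph.fromRel fun V1 V2 => Mutation V1.1 V2.1

/-- The type of maximal weakly separated collections over `N` containing `C`. -/
abbrev CMWSC {n : ℕ} (N : Fin n → Finset (Fin n)) (C : Finset (Finset (Fin n))) : Type :=
  {W : Finset (Finset (Fin n)) // IsMaxWSCOver N W ∧ C ⊆ W}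

/-- The `C`-constant graph `G^I(C)` : the induced subgraph of the exchange graph
on the maximal weakly separated collections containing `C`. -/
def constantGraph {n : ℕ} (N : Fin n → Finset (Fin n)) (C : Finset (Finset (Fin n))) :
    SimpleGraph (CMWSC N C) :=
  SimpleGraph.fromRel fun V1 V2 => Mutation V1.1 V2.1

/-- The set of distinct subsets appearing in the necklace. -/
def necklaceSet {n : ℕ} (N : Fin n → Finset (Fin n)) : Finset (Finset (Fin n)) :=
  Finset.univ.image N

/-- The necklace `N` has interior size `c`. -/
def HasInteriorSize {n : ℕ} (N : Fin n → Finset (Fin n)) (c : ℕ) : Prop :=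
  ∀ W, IsMaxWSCOver N W → W.card = (necklaceSet N).card + c

/-- The `C`-constant graph `G^I(C)` has co-dimension `c`. -/
def HasCodim {n : ℕ} (N : Fin n → Finset (Fin n)) (C : Finset (Finset (Fin n))) (c : ℕ) :
    Prop :=
  ∀ W, IsMaxWSCOver N W → W.card = C.card + c

/-- Two `k`-element subsets are quasi-adjacent if their intersection has `k - 1` elements. -/
def QuasiAdjacent {n : ℕ} (A B : Finset (Fin n)) : Prop :=
  A.card = B.card ∧ (A ∩ B).card + 1 = A.card

/-- The `C`-constant graph `G^I(C)` is applicable. -/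
def Applicable {n : ℕ} (N : Fin n → Finset (Fin n)) (C : Finset (Finset (Fin n))) : Prop :=
  ∀ V ∈ C, ∃ l : List (Finset (Fin n)),
    l.head? = some V ∧ (∀ W ∈ l, W ∈ C) ∧ List.Chain' QuasiAdjacent l ∧
    ∃ W ∈ necklaceSet N, l.getLast? = some W

/-- The necklace `N` is mutation-friendly: the intersection of all maximal weakly separated
collections over `N` is exactly the necklace. -/
def MutationFriendly {n : ℕ} (N : Fin n → Finset (Fin n)) : Prop :=
  ∀ A : Finset (Fin n), (∀ W, IsMaxWSCOver N W → A ∈ W) ↔ A ∈ necklaceSet N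

/-- The `C`-constant graph `G^I(C)` is mutation-friendly. -/
def CMutationFriendly {n : ℕ} (N : Fin n → Finset (Fin n)) (C : Finset (Finset (Fin n))) :
    Prop :=
  ∀ A : Finset (Fin n), (∀ W, IsMaxWSCOver N W → C ⊆ W → A ∈ W) ↔ A ∈ C

/-- The necklace `N` is very-mutation-friendly. -/
def VeryMutationFriendly {n : ℕ} (N : Fin n → Finset (Fin n)) : Prop :=
  MutationFriendly N ∧
    ∀ i : ℕ, HasInteriorSize N i →
      ∃ W : ℕ → Finset (Finset (Fin n)),
        (∀ j, 1 ≤ j → j ≤ i - 1 →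
            IsWSCOver N (W j) ∧ necklaceSet N ⊆ W j ∧
            (W j).card + j = i + (necklaceSet N).card ∧
            Applicable N (W j) ∧ CMutationFriendly N (W j)) ∧
        ∀ j, 1 ≤ j → j + 1 ≤ i - 1 → W (j + 1) ⊆ W j

/-- The circular interval `[i, j)` in `[n]`. -/
def circInterval {n : ℕ} (i j : Fin n) : Finset (Fin n) :=
  Finset.univ.filter fun x => (x - i).val < (j - i).val

/-- A connected decorated permutation. -/
def IsConnectedPerm {n : ℕ} (π : Equiv.Perm (Fin n)) : Prop :=
  ¬ ∃ i j : Fin n, i ≠ j ∧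
      (circInterval i j).image (fun x => π x) = circInterval i j ∧
      (circInterval j i).image (fun x => π x) = circInterval j i

/-- The Grassmann necklace associated to a decorated permutation:
`I_i = {j : j <ᵢ π⁻¹(j)}`. -/
def necklaceOfPerm {n : ℕ} (π : Equiv.Perm (Fin n)) : Fin n → Finset (Fin n) :=
  fun i => Finset.univ.filter fun j => cyclicLT i j (π⁻¹ j)

/-- `π` is the decorated permutation associated to the necklace `N`:
`π(i) = j` whenever `I_{i+1} = (I_i ∖ {i}) ∪ {j}`. -/
def IsDecoratedPermOf {n : ℕ} (π : Equiv.Perm (Fin n)) (N : Fin n → Finset (Fin n)) : Prop :=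
  ∀ i : Fin n, N (cnext i) = insert (π i) ((N i).erase i)

/-- The label-reflection operation `LR^{2i}[π](j) = 2i - π⁻¹(2i - j)`. -/
def LRop {n : ℕ} [NeZero n] (i : Fin n) (π : Equiv.Perm (Fin n)) : Equiv.Perm (Fin n) :=
  ((Equiv.subLeft (i + i)).trans (π⁻¹ : Equiv.Perm (Fin n))).trans
    (Equiv.subLeft (i + i))

/-- The between-label-reflection operation `BLR^{2i-1}[π](j) = (2i-1) - π⁻¹((2i-1) - j)`. -/
def BLRop {n : ℕ} [NeZero n] (i : Fin n) (π : Equiv.Perm (Fin n)) : Equiv.Perm (Fin n) :=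
  ((Equiv.subLeft (i + i - 1)).trans (π⁻¹ : Equiv.Perm (Fin n))).trans
    (Equiv.subLeft (i + i - 1))

/-- The rotation operation `R^i[π](j) = π(j - i) + i`. -/
def Rop {n : ℕ} [NeZero n] (i : Fin n) (π : Equiv.Perm (Fin n)) : Equiv.Perm (Fin n) :=
  ((Equiv.subRight i).trans π).trans (Equiv.addRight i)

/-- One step in generating the equivalence class of decorated permutations. -/
def PermStep {n : ℕ} [NeZero n] (π σ : Equiv.Perm (Fin n)) : Prop :=
  σ = π⁻¹ ∨ (∃ i : Fin n, σ = LRop i π) ∨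
    (Even n ∧ ∃ i : Fin n, σ = BLRop i π) ∨ ∃ i : Fin n, σ = Rop i π

/-- Two decorated permutations belong to the same equivalence class. -/
def PermEquiv {n : ℕ} [NeZero n] (π σ : Equiv.Perm (Fin n)) : Prop :=
  Relation.EqvGen PermStep π σ

/-- `σ` is the permutation `π₁ = 312` (on `[3]`, in `Fin 3` coordinates). -/
def IsStandardPermOne (σ : Equiv.Perm (Fin 3)) : Prop :=
  σ 1 = 0 ∧ σ 2 = 1 ∧ σ 0 = 2

/-- `σ` is the permutation `π_c` on `[2c]` (for `c ≥ 2`), in `Fin (2c)` coordinates,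
where the element `a ∈ [2c]` corresponds to `a % 2c : Fin (2c)`. -/
def IsStandardPerm (c : ℕ) (hc : 2 ≤ c) (σ : Equiv.Perm (Fin (2 * c))) : Prop :=
  ∀ a : ℕ, 1 ≤ a → a ≤ 2 * c →
    σ ⟨a % (2 * c), Nat.mod_lt _ (by omega)⟩ =
      ⟨(if a = 1 then 3
        else if a ≤ c then 2 * c + 1 - a
        else if a = c + 1 then 1
        else if a = c + 2 then 2
        else 2 * c + 3 - a) % (2 * c), Nat.mod_lt _ (by omega)⟩

/-- The decorated permutation `π` (on `[n]`) belongs to the equivalence class `𝒞_c`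
of the permutation `π_c`. -/
def InStandardClass (c : ℕ) {n : ℕ} (π : Equiv.Perm (Fin n)) : Prop :=
  (c = 1 ∧ ∃ h : n = 3, ∃ σ : Equiv.Perm (Fin 3),
      IsStandardPermOne σ ∧ PermEquiv ((finCongr h).permCongr π) σ) ∨
    ∃ hc : 2 ≤ c, ∃ h : n = 2 * c, ∃ σ : Equiv.Perm (Fin (2 * c)),
      IsStandardPerm c hc σ ∧
      @PermEquiv (2 * c) ⟨by omega⟩ ((finCongr h).permCongr π) σ

/-- The embedding of the elements of `[n]` into `[n + m - 2]` used in gluing (the element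
`n` of `[n]`, i.e. `0 : Fin n`, is sent to the element `n` of `[n + m - 2]`). -/
def glueEmbed {n m : ℕ} (hn : 3 ≤ n) (hm : 3 ≤ m) (v : Fin n) : Fin (n + m - 2) :=
  if h : v.val = 0 then ⟨n, by omega⟩ else ⟨v.val, by have := v.isLt; omega⟩

/-- The shifted embedding `b ↦ b + n - 2` of the elements of `[m]` into `[n + m - 2]`
used in gluing (the element `m` of `[m]`, i.e. `0 : Fin m`, is sent to the element
`n + m - 2`, i.e. `0 : Fin (n + m - 2)`). -/
def glueShift {n m : ℕ} (hn : 3 ≤ n) (hm : 3 ≤ m) (v : Fin m) : Fin (n + m - 2) :=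
  if h : v.val = 0 then ⟨0, by omega⟩ else ⟨v.val + n - 2, by have := v.isLt; omega⟩

/-- `π₃` is the decorated permutation of the glued Grassmann necklace `I □ J`, where
`π₁, π₂` are the decorated permutations of `I, J`. -/
def IsGluedPerm {n m : ℕ} (hn : 3 ≤ n) (hm : 3 ≤ m)
    (π1 : Equiv.Perm (Fin n)) (π2 : Equiv.Perm (Fin m))
    (π3 : Equiv.Perm (Fin (n + m - 2))) : Prop :=
  (∀ a : Fin n, a.val ≠ 0 → (π1 a).val ≠ 0 →
      π3 (glueEmbed hn hm a) = glueEmbed hn hm (π1 a)) ∧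
  (∀ a : Fin n, a.val ≠ 0 → (π1 a).val = 0 →
      π3 (glueEmbed hn hm a) = glueShift hn hm (π2 ⟨1, by omega⟩)) ∧
  (∀ a : Fin m, (a.val = 0 ∨ 3 ≤ a.val) → π2 a ≠ ⟨1, by omega⟩ →
      π3 (glueShift hn hm a) = glueShift hn hm (π2 a)) ∧
  (∀ a : Fin m, (a.val = 0 ∨ 3 ≤ a.val) → π2 a = ⟨1, by omega⟩ →
      π3 (glueShift hn hm a) = glueEmbed hn hm (π1 ⟨0, by omega⟩))

/-- The box product of an arbitrary family of simple graphs. -/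
def boxProdFamily {ι : Type*} {V : ι → Type*} (G : ∀ i, SimpleGraph (V i)) :
    SimpleGraph (∀ i, V i) where
  Adj v w := ∃ j, (G j).Adj (v j) (w j) ∧ ∀ l, l ≠ j → v l = w l
  symm := by
    constructor
    rintro v w ⟨j, h, hl⟩
    exact ⟨j, h.symm, fun l hlj => (hl l hlj).symm⟩
  loopless := by
    constructor
    rintro v ⟨j, h, -⟩
    exact (G j).ne_of_adj h rfl

open Finset

theorem exists_lt_and_eq_pair_of_card_eq_two {α : Type*} [LinearOrder α] {e : Finset α}
    (he : e.card = 2) : ∃ a b, a < b ∧ e = {a, b} := by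
  obtain ⟨x, y, hxy, rfl⟩ := card_eq_two.1 he
  rcases hxy.lt_or_gt with h | h
  exacts [⟨x, y, h, rfl⟩, ⟨y, x, h, pair_comm x y⟩]

theorem pairwise_lt_four_iff {α : Type*} [Preorder α] {a b c d : α} :
    [a, b, c, d].Pairwise (· < ·) ↔ a < b ∧ b < c ∧ c < d := by
  rw [← List.isChain_iff_pairwise]
  simp only [List.isChain_cons_cons, List.isChain_singleton, and_true]

section WeakSeparation

variable {n : ℕ} {a b c d : Fin n}

theorem cyclicallyOrdered_four_iff :
    CyclicallyOrdered [a, b, c, d] ↔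
      a < b ∧ b < c ∧ c < d ∨ b < c ∧ c < d ∧ d < a ∨
        c < d ∧ d < a ∧ a < b ∨ d < a ∧ a < b ∧ b < c := by
  constructor
  · rintro ⟨k, hk⟩
    rw [← List.rotate_mod] at hk
    have : k % 4 < 4 := Nat.mod_lt _ (by norm_num)
    interval_cases k % 4 <;>
      simp only [List.rotate_cons_succ, List.rotate_zero, List.cons_append, List.nil_append,
        pairwise_lt_four_iff] at hk <;> omega
  · rintro (h | h | h | h) <;> [exists 0; exists 1; exists 2; exists 3] <;>
      simp only [List.rotate_cons_succ, List.rotate_zero, List.cons_append, List.nil_append,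
        pairwise_lt_four_iff] <;> omega

theorem weaklySeparated_self (A : Finset (Fin n)) : WeaklySeparated A A := by
  rintro ⟨a, -, -, -, -, ha, -⟩
  simp at ha

theorem WeaklySeparated.symm {A B : Finset (Fin n)} (h : WeaklySeparated A B) :
    WeaklySeparated B A := by
  rintro ⟨a, b, a', b', hco, ha, ha', hb, hb'⟩
  refine h ⟨b, a', b', a, ?_, hb, hb', ha', ha⟩
  rw [cyclicallyOrdered_four_iff] at hco ⊢
  omega

theorem weaklySeparated_pair_iff (hab : a < b) (hcd : c < d) :
    WeaklySeparated {a, b} {c, d} ↔ ¬ (a < c ∧ c < b ∧ b < d) ∧ ¬ (c < a ∧ a < d ∧ d < b) := by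
  simp only [WeaklySeparated, cyclicallyOrdered_four_iff, mem_sdiff, mem_insert, mem_singleton]
  constructor
  · intro h
    constructor
    · rintro ⟨h₁, h₂, h₃⟩
      exact h ⟨a, c, b, d, by omega⟩
    · rintro ⟨h₁, h₂, h₃⟩
      exact h ⟨a, d, b, c, by omega⟩
  · rintro ⟨h₁, h₂⟩ ⟨x, y, x', y', h⟩
    omega

end WeakSeparation

section Triangulations

variable {n : ℕ} {i j k a b : Fin n} {e : Finset (Fin n)} {W W₁ W₂ : Finset (Finset (Fin n))}

def IsChord (i j : Fin n) (e : Finset (Fin n)) : Prop :=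
  e.card = 2 ∧ e ⊆ Icc i j

theorem pair_subset_Icc_iff (hab : a < b) : {a, b} ⊆ Icc i j ↔ i ≤ a ∧ b ≤ j := by
  simp only [insert_subset_iff, singleton_subset_iff, mem_Icc]
  omega

theorem isChord_pair_iff (hab : a < b) : IsChord i j {a, b} ↔ i ≤ a ∧ b ≤ j := by
  simp [IsChord, card_pair hab.ne, pair_subset_Icc_iff hab]

theorem IsChord.exists_eq_pair (he : IsChord i j e) :
    ∃ a b, i ≤ a ∧ a < b ∧ b ≤ j ∧ e = {a, b} := by
  obtain ⟨a, b, hab, rfl⟩ := exists_lt_and_eq_pair_of_card_eq_two he.1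
  obtain ⟨hia, hbj⟩ := (isChord_pair_iff hab).1 he
  exact ⟨a, b, hia, hab, hbj, rfl⟩

theorem IsChord.mono {i' j' : Fin n} (he : IsChord i j e) (hi : i' ≤ i) (hj : j ≤ j') :
    IsChord i' j' e :=
  ⟨he.1, he.2.trans (Icc_subset_Icc hi hj)⟩

theorem IsChord.weaklySeparated_pair (he : IsChord i j e) (hij : i < j) :
    WeaklySeparated e {i, j} := by
  obtain ⟨a, b, hia, hab, hbj, rfl⟩ := he.exists_eq_pair
  rw [weaklySeparated_pair_iff hab hij]
  omega

theorem IsChord.weaklySeparated_of_le {f : Finset (Fin n)} (he : IsChord i k e)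
    (hf : IsChord k j f) : WeaklySeparated e f := by
  obtain ⟨a, b, -, hab, hbk, rfl⟩ := he.exists_eq_pair
  obtain ⟨c, d, hkc, hcd, -, rfl⟩ := hf.exists_eq_pair
  rw [weaklySeparated_pair_iff hab hcd]
  omega

def IsNonCrossing (i j : Fin n) (W : Finset (Finset (Fin n))) : Prop :=
  (∀ e ∈ W, IsChord i j e) ∧ IsWSC W

/-- A triangulation of the polygon with vertices `i, …, j`, sides and the edge `{i, j}`
included. -/
def IsTriangulation (i j : Fin n) : Finset (Finset (Fin n)) → Prop :=
  Maximal (IsNonCrossing i j)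

theorem IsNonCrossing.not_interleaved {c d : Fin n} (hW : IsNonCrossing i j W)
    (hab : a < b) (hcd : c < d) (habW : {a, b} ∈ W) (hcdW : {c, d} ∈ W) :
    ¬ (a < c ∧ c < b ∧ b < d) :=
  ((weaklySeparated_pair_iff hab hcd).1 (hW.2 _ habW _ hcdW)).1

theorem IsTriangulation.mem_of_forall_weaklySeparated (hW : IsTriangulation i j W)
    (he : IsChord i j e) (hsep : ∀ f ∈ W, WeaklySeparated e f) : e ∈ W := by
  have hins : IsNonCrossing i j (insert e W) := by
    refine ⟨forall_mem_insert _ _ _ |>.2 ⟨he, hW.1.1⟩, fun f hf g hg => ?_⟩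
    rcases mem_insert.1 hf with rfl | hfW <;> rcases mem_insert.1 hg with rfl | hgW
    exacts [weaklySeparated_self _, hsep g hgW, (hsep f hfW).symm, hW.1.2 f hfW g hgW]
  exact hW.2 hins (subset_insert e W) (mem_insert_self e W)

theorem IsTriangulation.pair_mem (hW : IsTriangulation i j W) (hab : a < b) (hia : i ≤ a)
    (hbj : b ≤ j)
    (hsep : ∀ c d, c < d → {c, d} ∈ W → ¬ (a < c ∧ c < b ∧ b < d) ∧ ¬ (c < a ∧ a < d ∧ d < b)) :
    {a, b} ∈ W := by
  refine hW.mem_of_forall_weaklySeparated ((isChord_pair_iff hab).2 ⟨hia, hbj⟩) fun f hf => ?_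
  obtain ⟨c, d, -, hcd, -, rfl⟩ := (hW.1.1 f hf).exists_eq_pair
  exact (weaklySeparated_pair_iff hab hcd).2 (hsep c d hcd hf)

theorem IsTriangulation.outer_mem (hW : IsTriangulation i j W) (hij : i < j) : {i, j} ∈ W :=
  hW.mem_of_forall_weaklySeparated ((isChord_pair_iff hij).2 ⟨le_rfl, le_rfl⟩) fun f hf =>
    ((hW.1.1 f hf).weaklySeparated_pair hij).symm

theorem IsNonCrossing.subset_or_subset_or_eq (hW : IsNonCrossing i j W) (hik : i < k)
    (hkj : k < j) (hikW : {i, k} ∈ W) (hkjW : {k, j} ∈ W) (he : e ∈ W) :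
    e ⊆ Icc i k ∨ e ⊆ Icc k j ∨ e = {i, j} := by
  obtain ⟨a, b, hia, hab, hbj, rfl⟩ := (hW.1 e he).exists_eq_pair
  have h₁ := hW.not_interleaved hik hab hikW he
  have h₂ := hW.not_interleaved hab hkj he hkjW
  rw [pair_subset_Icc_iff hab, pair_subset_Icc_iff hab]
  rcases le_or_gt b k with hbk | hkb
  · exact Or.inl ⟨hia, hbk⟩
  rcases le_or_gt k a with hka | hak
  · exact Or.inr (Or.inl ⟨hka, hbj⟩)
  obtain rfl : a = i := by omega
  obtain rfl : b = j := by omega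
  exact Or.inr (Or.inr rfl)

theorem IsTriangulation.filter_subset_Icc (hW : IsTriangulation i j W) (hab : a < b)
    (habW : {a, b} ∈ W) : IsTriangulation a b (W.filter (· ⊆ Icc a b)) := by
  have hfilter : IsNonCrossing a b (W.filter (· ⊆ Icc a b)) :=
    ⟨fun e he => ⟨(hW.1.1 e (mem_filter.1 he).1).1, (mem_filter.1 he).2⟩,
      fun e he f hf => hW.1.2 e (mem_filter.1 he).1 f (mem_filter.1 hf).1⟩
  refine ⟨hfilter, fun V hV hWV e he => mem_filter.2 ⟨?_, (hV.1 e he).2⟩⟩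
  obtain ⟨x, y, hax, hxy, hyb, rfl⟩ := (hV.1 e he).exists_eq_pair
  obtain ⟨hia, hbj⟩ := (isChord_pair_iff hab).1 (hW.1.1 _ habW)
  refine hW.pair_mem hxy (hia.trans hax) (hyb.trans hbj) fun c d hcd hcdW => ?_
  by_cases hin : {c, d} ⊆ Icc a b
  · exact (weaklySeparated_pair_iff hxy hcd).1 (hV.2 _ he _ (hWV (mem_filter.2 ⟨hcdW, hin⟩)))
  · -- a chord outside `[a, b]` that does not cross `{a, b}` cannot cross a chord inside it
    have h₁ := hW.1.not_interleaved hab hcd habW hcdW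
    have h₂ := hW.1.not_interleaved hcd hab hcdW habW
    rw [pair_subset_Icc_iff hcd] at hin
    omega

theorem IsTriangulation.insert_union (h₁ : IsTriangulation i k W₁) (h₂ : IsTriangulation k j W₂)
    (hik : i < k) (hkj : k < j) : IsTriangulation i j (insert {i, j} (W₁ ∪ W₂)) := by
  have hij := hik.trans hkj
  have hchord : ∀ e ∈ insert {i, j} (W₁ ∪ W₂), IsChord i j e := by
    simp only [forall_mem_insert, mem_union, or_imp, forall_and]
    exact ⟨(isChord_pair_iff hij).2 ⟨le_rfl, le_rfl⟩,
      fun e he => (h₁.1.1 e he).mono le_rfl hkj.le, fun e he => (h₂.1.1 e he).mono hik.le le_rfl⟩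
  refine ⟨⟨hchord, fun e he f hf => ?_⟩, fun V hV hsub e he => ?_⟩
  · have houter := fun g hg => (hchord g hg).weaklySeparated_pair hij
    rcases mem_insert.1 he with rfl | he' <;> rcases mem_insert.1 hf with rfl | hf'
    · exact weaklySeparated_self _
    · exact (houter f hf).symm
    · exact houter e he
    rcases mem_union.1 he' with he₁ | he₂ <;> rcases mem_union.1 hf' with hf₁ | hf₂
    · exact h₁.1.2 e he₁ f hf₁
    · exact (h₁.1.1 e he₁).weaklySeparated_of_le (h₂.1.1 f hf₂)
    · exact ((h₁.1.1 f hf₁).weaklySeparated_of_le (h₂.1.1 e he₂)).symm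
    · exact h₂.1.2 e he₂ f hf₂
  · have hW₁V : W₁ ⊆ V := fun f hf => hsub (mem_insert_of_mem (mem_union_left _ hf))
    have hW₂V : W₂ ⊆ V := fun f hf => hsub (mem_insert_of_mem (mem_union_right _ hf))
    have hsepV : ∀ f ∈ V, WeaklySeparated e f := fun f hf => hV.2 e he f hf
    rcases hV.subset_or_subset_or_eq hik hkj (hW₁V (h₁.outer_mem hik)) (hW₂V (h₂.outer_mem hkj))
      he with hek | hej | rfl
    · exact mem_insert_of_mem <| mem_union_left _ <| h₁.mem_of_forall_weaklySeparated
        ⟨(hV.1 e he).1, hek⟩ fun f hf => hsepV f (hW₁V hf)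
    · exact mem_insert_of_mem <| mem_union_right _ <| h₂.mem_of_forall_weaklySeparated
        ⟨(hV.1 e he).1, hej⟩ fun f hf => hsepV f (hW₂V hf)
    · exact mem_insert_self _ _

theorem IsNonCrossing.disjoint_of_le (h₁ : IsNonCrossing i k W₁) (h₂ : IsNonCrossing k j W₂) :
    Disjoint W₁ W₂ := by
  refine Finset.disjoint_left.2 fun e he₁ he₂ => ?_
  obtain ⟨a, b, -, hab, hbk, rfl⟩ := (h₁.1 e he₁).exists_eq_pair
  have := ((isChord_pair_iff hab).1 (h₂.1 _ he₂)).1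
  omega

theorem IsNonCrossing.filter_insert_union_left (h₁ : IsNonCrossing i k W₁)
    (h₂ : IsNonCrossing k j W₂) (hkj : k < j) :
    (insert {i, j} (W₁ ∪ W₂)).filter (· ⊆ Icc i k) = W₁ := by
  have hout : ¬ {i, j} ⊆ Icc i k := fun h => by
    have := (mem_Icc.1 (h (mem_insert_of_mem (mem_singleton_self j)))).2
    omega
  have hW₂ : ∀ e ∈ W₂, ¬ e ⊆ Icc i k := fun e he hek => by
    obtain ⟨c, d, hkc, hcd, -, rfl⟩ := (h₂.1 e he).exists_eq_pair
    have := ((pair_subset_Icc_iff hcd).1 hek).2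
    omega
  rw [filter_insert, if_neg hout, filter_union, filter_true_of_mem fun e he => (h₁.1 e he).2,
    filter_false_of_mem hW₂, union_empty]

theorem IsNonCrossing.filter_insert_union_right (h₁ : IsNonCrossing i k W₁)
    (h₂ : IsNonCrossing k j W₂) (hik : i < k) :
    (insert {i, j} (W₁ ∪ W₂)).filter (· ⊆ Icc k j) = W₂ := by
  have hout : ¬ {i, j} ⊆ Icc k j := fun h => by
    have := (mem_Icc.1 (h (mem_insert_self i {j}))).1
    omega
  have hW₁ : ∀ e ∈ W₁, ¬ e ⊆ Icc k j := fun e he hek => by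
    obtain ⟨a, b, -, hab, hbk, rfl⟩ := (h₁.1 e he).exists_eq_pair
    have := ((pair_subset_Icc_iff hab).1 hek).1
    omega
  rw [filter_insert, if_neg hout, filter_union, filter_false_of_mem hW₁,
    filter_true_of_mem fun e he => (h₂.1 e he).2, empty_union]

theorem IsNonCrossing.card_insert_union (h₁ : IsNonCrossing i k W₁) (h₂ : IsNonCrossing k j W₂)
    (hik : i < k) (hkj : k < j) : (insert {i, j} (W₁ ∪ W₂)).card = W₁.card + W₂.card + 1 := by
  have hout : {i, j} ∉ W₁ ∪ W₂ := by
    rw [mem_union, not_or]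
    constructor <;> intro h
    · have := ((isChord_pair_iff (hik.trans hkj)).1 (h₁.1 _ h)).2; omega
    · have := ((isChord_pair_iff (hik.trans hkj)).1 (h₂.1 _ h)).1; omega
  rw [card_insert_of_notMem hout, card_union_of_disjoint (h₁.disjoint_of_le h₂)]

theorem IsNonCrossing.apex_unique {k' : Fin n} (hW : IsNonCrossing i j W) (hik : i < k)
    (hkj : k < j) (hik' : i < k') (hk'j : k' < j) (hikW : {i, k} ∈ W) (hkjW : {k, j} ∈ W)
    (hik'W : {i, k'} ∈ W) (hk'jW : {k', j} ∈ W) : k = k' := by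
  by_contra hne
  rcases lt_or_gt_of_ne hne with h | h
  · exact hW.not_interleaved hik' hkj hik'W hkjW ⟨hik, h, hk'j⟩
  · exact hW.not_interleaved hik hk'j hikW hk'jW ⟨hik', h, hkj⟩

theorem IsTriangulation.exists_apex (hW : IsTriangulation i j W) (hij : i.val + 2 ≤ j.val) :
    ∃ k, i < k ∧ k < j ∧ {i, k} ∈ W ∧ {k, j} ∈ W := by
  -- the apex is the least vertex `k > i` joined to `j`
  let K := univ.filter fun k => i < k ∧ k < j ∧ {k, j} ∈ W
  let l : Fin n := ⟨j.val - 1, by omega⟩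
  have hl : l.val + 1 = j.val := by simp only [l]; omega
  have hlK : l ∈ K := by
    refine mem_filter.2 ⟨mem_univ l, by omega, by omega, ?_⟩
    exact hW.pair_mem (by omega) (by omega) le_rfl fun c d _ _ => by omega
  obtain ⟨-, hik, hkj, hkjW⟩ := mem_filter.1 (K.min'_mem ⟨l, hlK⟩)
  refine ⟨_, hik, hkj, ?_, hkjW⟩
  refine hW.pair_mem hik le_rfl hkj.le fun c d hcd hcdW => ?_
  obtain ⟨hic, hdj⟩ := (isChord_pair_iff hcd).1 (hW.1.1 _ hcdW)
  refine ⟨fun ⟨hic', hck, hkd⟩ => ?_, by omega⟩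
  rcases hdj.lt_or_eq with hdj | rfl
  · exact hW.1.not_interleaved hcd hkj hcdW hkjW ⟨hck, hkd, hdj⟩
  · exact not_le.2 hck (K.min'_le c (mem_filter.2 ⟨mem_univ c, hic', hcd, hcdW⟩))

theorem IsNonCrossing.eq_insert_union (hW : IsNonCrossing i j W) (hik : i < k) (hkj : k < j)
    (hikW : {i, k} ∈ W) (hkjW : {k, j} ∈ W) (hijW : {i, j} ∈ W) :
    W = insert {i, j} (W.filter (· ⊆ Icc i k) ∪ W.filter (· ⊆ Icc k j)) := by
  ext e
  simp only [mem_insert, mem_union, mem_filter]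
  constructor
  · intro he
    rcases hW.subset_or_subset_or_eq hik hkj hikW hkjW he with h | h | h
    exacts [Or.inr (Or.inl ⟨he, h⟩), Or.inr (Or.inr ⟨he, h⟩), Or.inl h]
  · rintro (rfl | ⟨he, -⟩ | ⟨he, -⟩)
    exacts [hijW, he, he]

theorem isTriangulation_iff_eq_singleton (hij : i.val + 1 = j.val) :
    IsTriangulation i j W ↔ W = {{i, j}} := by
  have hlt : i < j := by omega
  have hchord : ∀ e, IsChord i j e → e = {i, j} := fun e he => by
    obtain ⟨a, b, hia, hab, hbj, rfl⟩ := he.exists_eq_pair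
    obtain rfl : a = i := by omega
    obtain rfl : b = j := by omega
    rfl
  constructor
  · intro hW
    exact eq_singleton_iff_unique_mem.2 ⟨hW.outer_mem hlt, fun e he => hchord e (hW.1.1 e he)⟩
  · rintro rfl
    refine ⟨⟨?_, ?_⟩, fun V hV _ e he => mem_singleton.2 (hchord e (hV.1 e he))⟩
    · simpa using (isChord_pair_iff hlt).2 ⟨le_rfl, le_rfl⟩
    · simpa [IsWSC] using weaklySeparated_self _

theorem IsTriangulation.card_add_one (hW : IsTriangulation i j W) (hij : i < j) :
    W.card + 1 = 2 * (j.val - i.val) := by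
  induction hd : j.val - i.val using Nat.strong_induction_on generalizing i j W with
  | _ d ih =>
  rcases (show i.val + 1 = j.val ∨ i.val + 2 ≤ j.val by omega) with h | h
  · rw [(isTriangulation_iff_eq_singleton h).1 hW, card_singleton]
    omega
  obtain ⟨k, hik, hkj, hikW, hkjW⟩ := hW.exists_apex h
  have h₁ := hW.filter_subset_Icc hik hikW
  have h₂ := hW.filter_subset_Icc hkj hkjW
  rw [hW.1.eq_insert_union hik hkj hikW hkjW (hW.outer_mem hij),
    h₁.1.card_insert_union h₂.1 hik hkj]
  have := ih _ (by omega) h₁ hik rfl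
  have := ih _ (by omega) h₂ hkj rfl
  omega

def glueTriangulations :
    (Σ k : Ioo i j, {W // IsTriangulation i k W} × {W // IsTriangulation k j W}) →
      {W // IsTriangulation i j W} :=
  fun ⟨k, W₁, W₂⟩ => ⟨insert {i, j} (W₁.1 ∪ W₂.1),
    W₁.2.insert_union W₂.2 (mem_Ioo.1 k.2).1 (mem_Ioo.1 k.2).2⟩

theorem glueTriangulations_injective :
    Function.Injective (glueTriangulations (i := i) (j := j)) := by
  rintro ⟨⟨k, hk⟩, ⟨W₁, h₁⟩, ⟨W₂, h₂⟩⟩ ⟨⟨k', hk'⟩, ⟨W₁', h₁'⟩, ⟨W₂', h₂'⟩⟩ h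
  rw [mem_Ioo] at hk hk'
  have hG : insert {i, j} (W₁ ∪ W₂) = insert {i, j} (W₁' ∪ W₂') := congrArg Subtype.val h
  have hmem₁ : ∀ {k V₁ V₂}, IsTriangulation i k V₁ → i < k → {i, k} ∈ insert {i, j} (V₁ ∪ V₂) :=
    fun hV hik => mem_insert_of_mem (mem_union_left _ (hV.outer_mem hik))
  have hmem₂ : ∀ {k V₁ V₂}, IsTriangulation k j V₂ → k < j → {k, j} ∈ insert {i, j} (V₁ ∪ V₂) :=
    fun hV hkj => mem_insert_of_mem (mem_union_right _ (hV.outer_mem hkj))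
  obtain rfl : k = k' := (h₁.insert_union h₂ hk.1 hk.2).1.apex_unique hk.1 hk.2 hk'.1 hk'.2
    (hmem₁ h₁ hk.1) (hmem₂ h₂ hk.2) (hG ▸ hmem₁ h₁' hk'.1) (hG ▸ hmem₂ h₂' hk'.2)
  obtain rfl : W₁ = W₁' := by
    rw [← h₁.1.filter_insert_union_left h₂.1 hk.2, hG, h₁'.1.filter_insert_union_left h₂'.1 hk.2]
  obtain rfl : W₂ = W₂' := by
    rw [← h₁.1.filter_insert_union_right h₂.1 hk.1, hG,
      h₁'.1.filter_insert_union_right h₂'.1 hk.1]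
  rfl

theorem glueTriangulations_surjective (hij : i.val + 2 ≤ j.val) :
    Function.Surjective (glueTriangulations (i := i) (j := j)) := by
  rintro ⟨W, hW⟩
  obtain ⟨k, hik, hkj, hikW, hkjW⟩ := hW.exists_apex hij
  exact ⟨⟨⟨k, mem_Ioo.2 ⟨hik, hkj⟩⟩, ⟨_, hW.filter_subset_Icc hik hikW⟩,
    ⟨_, hW.filter_subset_Icc hkj hkjW⟩⟩,
    Subtype.ext (hW.1.eq_insert_union hik hkj hikW hkjW (hW.outer_mem (hik.trans hkj))).symm⟩

end Triangulations

theorem sum_Ioo_catalan_mul_catalan {a b : ℕ} (hab : a + 2 ≤ b) :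
    ∑ k ∈ Ioo a b, catalan (k - a - 1) * catalan (b - k - 1) = catalan (b - a - 1) := by
  obtain ⟨m, rfl⟩ : ∃ m, b = a + m + 2 := ⟨b - a - 2, by omega⟩
  rw [← Ico_add_one_left_eq_Ioo, sum_Ico_eq_sum_range, show a + m + 2 - a - 1 = m + 1 by omega,
    catalan_succ, Fin.sum_univ_eq_sum_range (fun t => catalan t * catalan (m - t)),
    show a + m + 2 - (a + 1) = m + 1 by omega]
  refine sum_congr rfl fun t ht => ?_
  rw [mem_range] at ht
  rw [show a + 1 + t - a - 1 = t by omega, show a + m + 2 - (a + 1 + t) - 1 = m - t by omega]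

theorem card_triangulations {n : ℕ} {i j : Fin n} (hij : i < j) :
    Nat.card {W // IsTriangulation i j W} = catalan (j.val - i.val - 1) := by
  induction hd : j.val - i.val using Nat.strong_induction_on generalizing i j with
  | _ d ih =>
  rcases (show i.val + 1 = j.val ∨ i.val + 2 ≤ j.val by omega) with h | h
  · rw [show d - 1 = 0 by omega, catalan_zero, Nat.card_eq_one_iff_exists]
    exact ⟨⟨_, (isTriangulation_iff_eq_singleton h).2 rfl⟩,
      fun W => Subtype.ext ((isTriangulation_iff_eq_singleton h).1 W.2)⟩
  rw [← Nat.card_congr (Equiv.ofBijective _ ⟨glueTriangulations_injective,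
    glueTriangulations_surjective h⟩), Nat.card_sigma, ← hd, ← sum_Ioo_catalan_mul_catalan h,
    ← Fin.map_valEmbedding_Ioo, sum_map]
  refine Eq.trans (sum_congr rfl fun k _ => ?_) (sum_coe_sort (Ioo i j) _)
  obtain ⟨hik, hkj⟩ := mem_Ioo.1 k.2
  rw [Nat.card_prod, ih _ (by omega) hik rfl, ih _ (by omega) hkj rfl]
  rfl

theorem sort_pair_of_lt {α : Type*} [LinearOrder α] {a b : α} (hab : a < b) :
    sort {a, b} (· ≤ ·) = [a, b] := by
  rw [sort_insert _ (fun x hx => mem_singleton.1 hx ▸ hab.le) (by simpa using hab.ne),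
    sort_singleton]

theorem isMaxWSCOver_iff_maximal {n : ℕ} {N : Fin n → Finset (Fin n)}
    {W : Finset (Finset (Fin n))} : IsMaxWSCOver N W ↔ Maximal (IsWSCOver N) W :=
  and_congr_right fun _ => forall_congr' fun _ => imp_congr_right fun _ =>
    ⟨fun h hWV => (h hWV).le, fun h hWV => (h hWV).antisymm hWV⟩

section PolygonNecklace

variable {n : ℕ}

def polygonNecklace (n : ℕ) : Fin n → Finset (Fin n) := fun j => {j, cnext j}

theorem val_cnext (j : Fin n) : (cnext j).val = if j.val + 1 < n then j.val + 1 else 0 := by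
  have hj := j.isLt
  simp only [cnext, Fin.val_add]
  rcases (show n = 1 ∨ 2 ≤ n by omega) with rfl | hn
  · simp
  rw [Nat.mod_eq_of_lt (show 1 < n by omega)]
  split_ifs with h
  · exact Nat.mod_eq_of_lt h
  · rw [show j.val + 1 = n by omega, Nat.mod_self]

theorem cnext_ne_self (hn : 2 ≤ n) (j : Fin n) : cnext j ≠ j := by
  intro h
  have := congrArg Fin.val h
  rw [val_cnext] at this
  split_ifs at this <;> omega

theorem card_polygonNecklace (hn : 2 ≤ n) (j : Fin n) : (polygonNecklace n j).card = 2 :=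
  card_pair (cnext_ne_self hn j).symm

theorem polygonNecklace_isGrassmannNecklace (hn : 2 ≤ n) :
    IsGrassmannNecklace (polygonNecklace n) := by
  refine ⟨fun i j => by rw [card_polygonNecklace hn, card_polygonNecklace hn],
    fun i => mem_insert_self _ _, fun i x hx => ?_⟩
  simp only [polygonNecklace, mem_sdiff, mem_insert, mem_singleton] at hx ⊢
  tauto

theorem polygonNecklace_injective (hn : 3 ≤ n) : Function.Injective (polygonNecklace n) := by
  intro a b h
  have ha : a ∈ polygonNecklace n b := h ▸ mem_insert_self a _
  have hb : b ∈ polygonNecklace n a := h ▸ mem_insert_self b _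
  simp only [polygonNecklace, mem_insert, mem_singleton] at ha hb
  rcases ha with rfl | rfl
  · rfl
  rcases hb with h' | h'
  · exact absurd h'.symm (cnext_ne_self (by omega) b)
  · have := congrArg Fin.val h'
    rw [val_cnext, val_cnext] at this
    split_ifs at this <;> omega

theorem card_necklaceSet_polygonNecklace (hn : 3 ≤ n) :
    (necklaceSet (polygonNecklace n)).card = n := by
  rw [necklaceSet, card_image_of_injective _ (polygonNecklace_injective hn), card_univ,
    Fintype.card_fin]

theorem mem_positroid_polygonNecklace (hn : 2 ≤ n) {J : Finset (Fin n)} :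
    J ∈ positroid (polygonNecklace n) ↔ J.card = 2 := by
  have : NeZero n := ⟨by omega⟩
  refine ⟨fun h => (h.1 0).trans (card_polygonNecklace hn 0),
    fun hJ => ⟨fun i => hJ.trans (card_polygonNecklace hn i).symm, fun i => ?_⟩⟩
  obtain ⟨u, v, huv, hJi⟩ := exists_lt_and_eq_pair_of_card_eq_two
    ((card_image_of_injective J (sub_left_injective (b := i))).trans hJ)
  have h1 : ((1 : Fin n) : ℕ) = 1 := by rw [Fin.val_one', Nat.mod_eq_of_lt hn]
  have h01 : (0 : Fin n) < 1 := by rw [Fin.lt_def, Fin.val_zero, h1]; exact Nat.one_pos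
  rw [FinsetLE, polygonNecklace, image_insert, image_singleton, sub_self,
    show cnext i - i = 1 from add_sub_cancel_left i 1, hJi, sort_pair_of_lt h01,
    sort_pair_of_lt huv]
  exact .cons (Fin.zero_le u) (.cons (by omega) .nil)

theorem isMaxWSCOver_polygonNecklace_iff {m : ℕ} {W : Finset (Finset (Fin (m + 2)))} :
    IsMaxWSCOver (polygonNecklace (m + 2)) W ↔ IsTriangulation 0 (Fin.last (m + 1)) W := by
  have hsub : ∀ e : Finset (Fin (m + 2)), e ⊆ Icc 0 (Fin.last (m + 1)) :=
    fun e x _ => mem_Icc.2 ⟨Fin.zero_le x, Fin.le_last x⟩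
  have hWSC : IsWSCOver (polygonNecklace (m + 2)) = IsNonCrossing 0 (Fin.last (m + 1)) := by
    ext W
    simp only [IsWSCOver, IsNonCrossing, IsChord, mem_positroid_polygonNecklace le_add_self,
      hsub, and_true]
    exact and_comm
  rw [isMaxWSCOver_iff_maximal, hWSC, IsTriangulation]

theorem polygonNecklace_hasInteriorSize (hn : 3 ≤ n) :
    HasInteriorSize (polygonNecklace n) (n - 3) := by
  obtain ⟨m, rfl⟩ : ∃ m, n = m + 2 := ⟨n - 2, by omega⟩
  intro W hW
  have := (isMaxWSCOver_polygonNecklace_iff.1 hW).card_add_one (Fin.last_pos (n := m))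
  rw [card_necklaceSet_polygonNecklace hn]
  simp only [Fin.val_last, Fin.val_zero] at this
  omega

theorem card_mwsc_polygonNecklace (hn : 2 ≤ n) :
    Nat.card (MWSC (polygonNecklace n)) = catalan (n - 2) := by
  obtain ⟨m, rfl⟩ : ∃ m, n = m + 2 := ⟨n - 2, by omega⟩
  rw [Nat.card_congr (Equiv.subtypeEquivRight fun W => isMaxWSCOver_polygonNecklace_iff),
    card_triangulations (Fin.last_pos (n := m))]
  simp

end PolygonNecklace

theorem triangulation_catalan (n : ℕ) (hn : 3 ≤ n) :
    IsGrassmannNecklace (fun j : Fin n => ({j, cnext j} : Finset (Fin n))) ∧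
    HasInteriorSize (fun j : Fin n => ({j, cnext j} : Finset (Fin n))) (n - 3) ∧
    Nat.card (MWSC (fun j : Fin n => ({j, cnext j} : Finset (Fin n)))) = catalan (n - 2) ∧
    ∀ i : ℕ, ∃ (m : ℕ) (M : Fin m → Finset (Fin m)),
      3 ≤ m ∧ IsGrassmannNecklace M ∧ (∀ l, 2 ≤ (M l).card) ∧
      HasInteriorSize M i ∧ Nat.card (MWSC M) = catalan (i + 1) := by
  refine ⟨polygonNecklace_isGrassmannNecklace (by omega), polygonNecklace_hasInteriorSize hn,
    card_mwsc_polygonNecklace (by omega), fun i => ?_⟩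
  refine ⟨i + 3, polygonNecklace (i + 3), by omega, polygonNecklace_isGrassmannNecklace (by omega),
    fun l => (card_polygonNecklace (by omega) l).ge, ?_, ?_⟩
  · simpa using polygonNecklace_hasInteriorSize (n := i + 3) (by omega)
  · simpa using card_mwsc_polygonNecklace (n := i + 3) (by omega)

end WS
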